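/- arXiv:2505.22136 — 2 statements merged into one kernel-verified Lean document; each statement's English description precedes it below -/
import Mathlib

section
/- Let μ be a Borel probability measure on ℝ and suppose there exists C > 0 such that |μ̂(ξ)| ≤ C|ξ|^{-1} for all ξ ∈ ℝ \ {0}. If a countable set Λ ⊂ ℝ, enumerated in increasing order as Λ = {λ_k : k ∈ ℤ}, satisfies ∑_{λ∈Λ} |∫ f(x) e^{-2πiλx} dμ(x)|² ≥ A ∫ |f(x)|² dμ(x) for all f ∈ L²(μ) with A > 3/2, then g_min(Λ)² ≤ C²π²/(3(A−1)). -/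
open MeasureTheory Filter Set
open scoped Real

/-- The essential minimal spectral gap of an increasing enumeration `lam : ℤ → ℝ`:
`inf {c ≥ 0 : g_k < c for infinitely many k}` where `g_k = lam k - lam (k-1)`. -/
noncomputable def gmin (lam : ℤ → ℝ) : ℝ :=
  sInf {c : ℝ | 0 ≤ c ∧ {k : ℤ | lam k - lam (k - 1) < c}.Infinite}

/-- The Fourier transform of a measure on `ℝ`: `μ̂(ξ) = ∫ e^{-2πiξx} dμ(x)`. -/
noncomputable def muHat (μ : Measure ℝ) (ξ : ℝ) : ℂ :=
  ∫ x, Complex.exp ((-2 * π * ξ * x : ℝ) * Complex.I) ∂μ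

/-!
If only finitely many gaps are smaller than `c`, test the frame inequality against the character
`x ↦ e^{2πi λ_a x}` for an index `a` far to the right of them. Its frame coefficients are
`μ̂(λ_k - λ_a)`, and `|λ_k - λ_a| ≥ c |k - a|`, up to a fixed shift `M` (the length of the window
of small gaps) for `k` to the left of that window. The decay `|μ̂(ξ)| ≤ C/|ξ|` then bounds the frame
sum by `1 + 2 (C/c)² (π²/6 + ∑_{n > N} 1/n²)`, where `N` grows with `a`; letting `a → ∞` gives
`A - 1 ≤ C²π²/(3c²)`. So every `c` with `c² > C²π²/(3(A-1))` has infinitely many gaps below it.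
-/

open scoped Topology

noncomputable def baselTerm (n : ℕ) : ℝ := 1 / ((n : ℝ) + 1) ^ 2

theorem baselTerm_nonneg (n : ℕ) : 0 ≤ baselTerm n := by unfold baselTerm; positivity

theorem hasSum_baselTerm : HasSum baselTerm (π ^ 2 / 6) := by
  unfold baselTerm
  simpa using (hasSum_nat_add_iff' 1).mpr hasSum_zeta_two

theorem summable_and_tsum_le_of_le_baselTerm {s : ℕ → ℝ} (hs : 0 ≤ s) {q : ℝ} (hq : 0 ≤ q)
    {d N : ℕ} (hnear : ∀ n < d, s n ≤ q * baselTerm n)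
    (hfar : ∀ n, s (n + d) ≤ q * baselTerm (n + N)) :
    Summable s ∧ ∑' n, s n ≤ q * (π ^ 2 / 6 + ∑' n, baselTerm (n + N)) := by
  have htail : Summable fun n => q * baselTerm (n + N) :=
    ((summable_nat_add_iff N).mpr hasSum_baselTerm.summable).mul_left q
  have hfar_summable : Summable fun n => s (n + d) :=
    htail.of_nonneg_of_le (fun n => hs _) hfar
  have hsumm : Summable s := (summable_nat_add_iff d).mp hfar_summable
  refine ⟨hsumm, ?_⟩
  have hhead : ∑ n ∈ Finset.range d, s n ≤ q * (π ^ 2 / 6) :=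
    calc ∑ n ∈ Finset.range d, s n ≤ ∑ n ∈ Finset.range d, q * baselTerm n :=
          Finset.sum_le_sum fun n hn => hnear n (Finset.mem_range.mp hn)
      _ = q * ∑ n ∈ Finset.range d, baselTerm n := (Finset.mul_sum _ _ _).symm
      _ ≤ q * (π ^ 2 / 6) := by
          gcongr
          exact sum_le_hasSum _ (fun n _ => baselTerm_nonneg n) hasSum_baselTerm
  have hrest : ∑' n, s (n + d) ≤ q * ∑' n, baselTerm (n + N) := by
    rw [← tsum_mul_left]
    exact hfar_summable.tsum_le_tsum hfar htail
  rw [← hsumm.sum_add_tsum_nat_add d]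
  linarith

theorem mul_sub_le_sub_of_le_gaps {lam : ℤ → ℝ} {c : ℝ} {i j : ℤ} (hij : i ≤ j)
    (hgap : ∀ k, i < k → k ≤ j → c ≤ lam k - lam (k - 1)) :
    c * ((j : ℝ) - i) ≤ lam j - lam i := by
  induction j, hij using Int.leInduction with
  | base => simp
  | succ j hij ih =>
    have hlast : c ≤ lam (j + 1) - lam j := by
      simpa using hgap (j + 1) (by omega) le_rfl
    have hprev := ih fun k hik hkj => hgap k hik (by omega)
    push_cast
    linarith

theorem mul_sub_sub_le_sub_of_le_gaps_off_window {lam : ℤ → ℝ} (hmono : Monotone lam) {c : ℝ}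
    (hc : 0 ≤ c) {b : ℤ} {M : ℕ} (hgood : ∀ k, (k ≤ b - M ∨ b < k) → c ≤ lam k - lam (k - 1))
    {i j : ℤ} (hij : i ≤ j) :
    c * ((j : ℝ) - i - M) ≤ lam j - lam i := by
  -- `[i', j']` is the part of `[i, j]` that meets the window `(b - M, b]` of possibly small gaps
  obtain ⟨i', hi'⟩ : ∃ i', i' = min j (max i (b - M)) := ⟨_, rfl⟩
  obtain ⟨j', hj'⟩ : ∃ j', j' = max i' (min j b) := ⟨_, rfl⟩
  have hleft := mul_sub_le_sub_of_le_gaps (lam := lam) (c := c) (show i ≤ i' by omega)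
    fun k hik hki' => hgood k (by omega)
  have hright := mul_sub_le_sub_of_le_gaps (lam := lam) (c := c) (show j' ≤ j by omega)
    fun k hjk hkj => hgood k (by omega)
  have hmid : lam i' ≤ lam j' := hmono (by omega)
  have hwidth : ((j' : ℝ) - i') ≤ M := by exact_mod_cast (show j' - i' ≤ M by omega)
  nlinarith

theorem norm_muHat_le_one (μ : Measure ℝ) [IsProbabilityMeasure μ] (ξ : ℝ) :
    ‖muHat μ ξ‖ ≤ 1 :=
  (norm_integral_le_integral_norm _).trans_eq (by simp only [Complex.norm_exp_ofReal_mul_I]; simp)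

theorem sq_norm_muHat_le_of_le_abs {μ : Measure ℝ} {C : ℝ}
    (hdecay : ∀ ξ : ℝ, ξ ≠ 0 → ‖muHat μ ξ‖ ≤ C * |ξ|⁻¹) {c : ℝ} (hc : 0 < c) {ξ : ℝ} (n : ℕ)
    (hξ : c * ((n : ℝ) + 1) ≤ |ξ|) :
    ‖muHat μ ξ‖ ^ 2 ≤ (C / c) ^ 2 * baselTerm n := by
  have hC : 0 ≤ C := by simpa using (norm_nonneg _).trans (hdecay 1 one_ne_zero)
  have hr : 0 < c * ((n : ℝ) + 1) := by positivity
  have hξ0 : ξ ≠ 0 := abs_pos.mp (hr.trans_le hξ)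
  calc ‖muHat μ ξ‖ ^ 2 ≤ (C * (c * ((n : ℝ) + 1))⁻¹) ^ 2 := by
        gcongr
        exact (hdecay ξ hξ0).trans (by gcongr)
    _ = (C / c) ^ 2 * baselTerm n := by unfold baselTerm; field_simp

theorem le_tsum_sq_norm_muHat_sub {μ : Measure ℝ} [IsProbabilityMeasure μ] {lam : ℤ → ℝ} {A : ℝ}
    (hframe : ∀ f : ℝ → ℂ, MemLp f 2 μ →
      A * ∫ x, ‖f x‖ ^ 2 ∂μ ≤
        ∑' k : ℤ, ‖∫ x, f x * Complex.exp ((-2 * π * lam k * x : ℝ) * Complex.I) ∂μ‖ ^ 2)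
    (a : ℝ) :
    A ≤ ∑' k, ‖muHat μ (lam k - a)‖ ^ 2 := by
  set e : ℝ → ℂ := fun x => Complex.exp ((2 * π * a * x : ℝ) * Complex.I)
  have hmem : MemLp e 2 μ :=
    MemLp.of_bound (by fun_prop) 1 (ae_of_all _ fun x => (Complex.norm_exp_ofReal_mul_I _).le)
  have hnorm : ∫ x, ‖e x‖ ^ 2 ∂μ = 1 := by simp only [e, Complex.norm_exp_ofReal_mul_I]; simp
  have hcoeff : ∀ k, ∫ x, e x * Complex.exp ((-2 * π * lam k * x : ℝ) * Complex.I) ∂μ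
      = muHat μ (lam k - a) := by
    intro k
    refine integral_congr_ae (ae_of_all _ fun x => ?_)
    simp only [e, ← Complex.exp_add]
    congr 1
    push_cast
    ring
  simpa only [hnorm, mul_one, hcoeff] using hframe e hmem

theorem tsum_sq_norm_muHat_sub_le {μ : Measure ℝ} [IsProbabilityMeasure μ] {C : ℝ}
    (hdecay : ∀ ξ : ℝ, ξ ≠ 0 → ‖muHat μ ξ‖ ≤ C * |ξ|⁻¹) {lam : ℤ → ℝ} (hmono : Monotone lam)
    {c : ℝ} (hc : 0 < c) {b : ℤ} {M : ℕ}
    (hgood : ∀ k, (k ≤ b - M ∨ b < k) → c ≤ lam k - lam (k - 1)) (N : ℕ) :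
    ∑' j, ‖muHat μ (lam j - lam (b + M + N))‖ ^ 2 ≤
      1 + 2 * ((C / c) ^ 2 * (π ^ 2 / 6 + ∑' n, baselTerm (n + N))) := by
  set a := b + M + N
  set F : ℤ → ℝ := fun m => ‖muHat μ (lam (a + m) - lam a)‖ ^ 2
  have hF : 0 ≤ F := fun m => sq_nonneg _
  have hq : 0 ≤ (C / c) ^ 2 := sq_nonneg _
  have hbound (m : ℤ) (n : ℕ) (h : c * ((n : ℝ) + 1) ≤ |lam (a + m) - lam a|) :
      F m ≤ (C / c) ^ 2 * baselTerm n :=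
    sq_norm_muHat_le_of_le_abs hdecay hc n h
  have hright (n : ℕ) : F (n + 1) ≤ (C / c) ^ 2 * baselTerm n := by
    refine hbound _ n ((le_of_eq_of_le ?_ (mul_sub_le_sub_of_le_gaps (lam := lam) (c := c)
      (show a ≤ a + (n + 1) by omega) fun k hk _ => hgood k (by omega))).trans (le_abs_self _))
    push_cast
    ring
  obtain ⟨hRs, hR⟩ := summable_and_tsum_le_of_le_baselTerm (s := fun n : ℕ => F (n + 1))
    (fun n => hF _) hq (d := N) (fun n _ => hright n) fun n => by
      simpa only [Nat.cast_add, add_assoc] using hright (n + N)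
  have hnear (n : ℕ) (hn : n < M + N) : F (-(n + 1)) ≤ (C / c) ^ 2 * baselTerm n := by
    refine hbound _ n ((le_of_eq_of_le ?_ (mul_sub_le_sub_of_le_gaps (lam := lam) (c := c)
      (show a + -(n + 1) ≤ a by omega) fun k hk _ => hgood k (by omega))).trans ?_)
    · push_cast
      ring
    · rw [abs_sub_comm]
      exact le_abs_self _
  have hfar (n : ℕ) : F (-((n + (M + N) : ℕ) + 1)) ≤ (C / c) ^ 2 * baselTerm (n + N) := by
    refine hbound _ (n + N) ((le_of_eq_of_le ?_
      (mul_sub_sub_le_sub_of_le_gaps_off_window hmono hc.le hgood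
        (show a + -((n + (M + N) : ℕ) + 1) ≤ a by omega))).trans ?_)
    · push_cast
      ring
    · rw [abs_sub_comm]
      exact le_abs_self _
  obtain ⟨hLs, hL⟩ := summable_and_tsum_le_of_le_baselTerm (s := fun n : ℕ => F (-(n + 1)))
    (fun n => hF _) hq (d := M + N) hnear hfar
  have hRs' : Summable fun n : ℕ => F n :=
    (summable_nat_add_iff 1).mp (by simpa only [Nat.cast_add, Nat.cast_one] using hRs)
  have hcenter : F 0 ≤ 1 := by
    simpa [F] using norm_muHat_le_one μ 0
  calc ∑' j, ‖muHat μ (lam j - lam a)‖ ^ 2 = ∑' m, F m := ((Equiv.addLeft a).tsum_eq _).symm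
    _ = F 0 + ∑' n : ℕ, F (n + 1) + ∑' n : ℕ, F (-(n + 1)) := by
      rw [tsum_of_nat_of_neg_add_one hRs' hLs, hRs'.tsum_eq_zero_add]
      push_cast
      rfl
    _ ≤ _ := by linarith

theorem sq_le_of_finite_small_gaps {μ : Measure ℝ} [IsProbabilityMeasure μ] {C : ℝ}
    (hdecay : ∀ ξ : ℝ, ξ ≠ 0 → ‖muHat μ ξ‖ ≤ C * |ξ|⁻¹) {lam : ℤ → ℝ} (hmono : Monotone lam)
    {A : ℝ} (hA : 1 < A)
    (hframe : ∀ f : ℝ → ℂ, MemLp f 2 μ →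
      A * ∫ x, ‖f x‖ ^ 2 ∂μ ≤
        ∑' k : ℤ, ‖∫ x, f x * Complex.exp ((-2 * π * lam k * x : ℝ) * Complex.I) ∂μ‖ ^ 2)
    {c : ℝ} (hc : 0 < c) (hfin : {k : ℤ | lam k - lam (k - 1) < c}.Finite) :
    c ^ 2 ≤ C ^ 2 * π ^ 2 / (3 * (A - 1)) := by
  obtain ⟨b, M, hgood⟩ : ∃ (b : ℤ) (M : ℕ), ∀ k, (k ≤ b - M ∨ b < k) →
      c ≤ lam k - lam (k - 1) := by
    obtain ⟨b, hb⟩ := hfin.bddAbove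
    obtain ⟨b', hb'⟩ := hfin.bddBelow
    refine ⟨b, (b - b' + 1).toNat, fun k hk => ?_⟩
    by_contra! hsmall
    have := hb hsmall
    have := hb' hsmall
    omega
  have hA_le (N : ℕ) : A ≤ 1 + 2 * ((C / c) ^ 2 * (π ^ 2 / 6 + ∑' n, baselTerm (n + N))) :=
    (le_tsum_sq_norm_muHat_sub hframe _).trans (tsum_sq_norm_muHat_sub_le hdecay hmono hc hgood N)
  have hlim : Tendsto (fun N : ℕ => 1 + 2 * ((C / c) ^ 2 * (π ^ 2 / 6 + ∑' n, baselTerm (n + N))))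
      atTop (𝓝 (1 + 2 * ((C / c) ^ 2 * (π ^ 2 / 6 + 0)))) :=
    (((tendsto_sum_nat_add baselTerm).const_add _).const_mul _ |>.const_mul _).const_add _
  have hA_lim := ge_of_tendsto hlim (Eventually.of_forall hA_le)
  have hA_mul : (A - 1) * c ^ 2 ≤ C ^ 2 * π ^ 2 / 3 :=
    calc (A - 1) * c ^ 2 ≤ (C / c) ^ 2 * (π ^ 2 / 3) * c ^ 2 := by gcongr; linarith
      _ = C ^ 2 * π ^ 2 / 3 := by field_simp
  rw [le_div_iff₀ (by linarith)]
  linarith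

theorem gmin_nonneg (lam : ℤ → ℝ) : 0 ≤ gmin lam :=
  Real.sInf_nonneg fun _ hc => hc.1

theorem gmin_le_of_forall_lt_infinite {lam : ℤ → ℝ} {c₀ : ℝ} (hc₀ : 0 ≤ c₀)
    (h : ∀ c, c₀ < c → {k : ℤ | lam k - lam (k - 1) < c}.Infinite) : gmin lam ≤ c₀ :=
  le_of_forall_pos_le_add fun ε hε =>
    csInf_le ⟨0, fun _ hc => hc.1⟩ ⟨by linarith, h _ (by linarith)⟩

theorem stmt1_general (μ : Measure ℝ) [IsProbabilityMeasure μ]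
    (C : ℝ)
    (hdecay : ∀ ξ : ℝ, ξ ≠ 0 → ‖muHat μ ξ‖ ≤ C * |ξ|⁻¹)
    (lam : ℤ → ℝ) (hmono : StrictMono lam)
    (A : ℝ) (hA : 3 / 2 < A)
    (hframe : ∀ f : ℝ → ℂ, MemLp f 2 μ →
      A * ∫ x, ‖f x‖ ^ 2 ∂μ ≤
        ∑' k : ℤ, ‖∫ x, f x * Complex.exp ((-2 * π * lam k * x : ℝ) * Complex.I) ∂μ‖ ^ 2) :
    gmin lam ^ 2 ≤ C ^ 2 * π ^ 2 / (3 * (A - 1)) := by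
  have hB : 0 ≤ C ^ 2 * π ^ 2 / (3 * (A - 1)) := div_nonneg (by positivity) (by linarith)
  rw [← Real.le_sqrt (gmin_nonneg lam) hB]
  refine gmin_le_of_forall_lt_infinite (Real.sqrt_nonneg _) fun c hc => ?_
  have hc0 : 0 < c := (Real.sqrt_nonneg _).trans_lt hc
  by_contra hfin
  have := sq_le_of_finite_small_gaps hdecay hmono.monotone (by linarith) hframe hc0
    (Set.not_infinite.mp hfin)
  exact hc.not_ge ((Real.le_sqrt hc0.le hB).mpr this)

theorem stmt1 (μ : Measure ℝ) [IsProbabilityMeasure μ]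
    (C : ℝ) (hC : 0 < C)
    (hdecay : ∀ ξ : ℝ, ξ ≠ 0 → ‖muHat μ ξ‖ ≤ C * |ξ|⁻¹)
    (lam : ℤ → ℝ) (hmono : StrictMono lam)
    (A : ℝ) (hA : 3 / 2 < A)
    (hframe : ∀ f : ℝ → ℂ, MemLp f 2 μ →
      A * ∫ x, ‖f x‖ ^ 2 ∂μ ≤
        ∑' k : ℤ, ‖∫ x, f x * Complex.exp ((-2 * π * lam k * x : ℝ) * Complex.I) ∂μ‖ ^ 2) :
    gmin lam ^ 2 ≤ C ^ 2 * π ^ 2 / (3 * (A - 1)) :=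
  stmt1_general μ C hdecay lam hmono A hA hframe
end

section
/- Suppose a countable set Λ ⊂ ℝ, enumerated in increasing order as Λ = {λ_k : k ∈ ℤ}, satisfies the frame inequalities A ∫_{[0,1]} |f(x)|² dx ≤ ∑_{λ∈Λ} |∫_{[0,1]} f(x) e^{-2πiλx} dx|² ≤ B ∫_{[0,1]} |f(x)|² dx for all f ∈ L²([0,1]), where 0 < A ≤ B < ∞. Then 4/(π²B) ≤ g_max(Λ) ≤ sup{g_k(Λ) : k ∈ ℤ} ≤ π²B/A + 2. -/
/-
Testing the frame inequality on `x ↦ e^{2πitx}` turns it into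
`A ≤ ∑ₖ sinc²(π(t - λₖ)) ≤ B` for every real `t`. Since `sinc² ≥ 4/π²` on `[-π/2, π/2]`
(Jordan's inequality), a window of length one contains at most `π²B/4` points. Hence gaps `≤ c`
cannot persist for `c < 4/(π²B)`, and any `M = ⌈π²B/4⌉` consecutive steps advance by more than
one. At the midpoint `t` of a gap of length `2a`, the latter keeps the `i`-th point on either side
at distance more than `a - 1 + i/M`, so `sinc²(πu) ≤ 1/(πu)²` bounds the sum by
`4M/(π²(a - 1))`; comparing with `A` bounds `a`.
-/

open MeasureTheory Filter Set
open scoped Real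

/-- The essential maximal spectral gap of an increasing enumeration `lam : ℤ → ℝ`:
`sup {c ≥ 0 : g_k > c for infinitely many k}` where `g_k = lam k - lam (k-1)`. -/
noncomputable def gmax (lam : ℤ → ℝ) : ℝ :=
  sSup {c : ℝ | 0 ≤ c ∧ {k : ℤ | c < lam k - lam (k - 1)}.Infinite}

open Real

lemma norm_setIntegral_Icc_exp_eq_abs_sinc (u : ℝ) :
    ‖∫ x in Icc (0 : ℝ) 1, Complex.exp ((2 * π * u * x : ℝ) * Complex.I)‖ = |sinc (π * u)| := by
  rcases eq_or_ne u 0 with rfl | hu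
  · simp
  have hc : Complex.I * (2 * π * u : ℝ) ≠ 0 := by simp [pi_ne_zero, hu]
  have hexp : ∀ x : ℝ, Complex.exp ((2 * π * u * x : ℝ) * Complex.I) =
      Complex.exp (Complex.I * (2 * π * u : ℝ) * x) := fun x => by push_cast; ring_nf
  rw [integral_Icc_eq_integral_Ioc, ← intervalIntegral.integral_of_le zero_le_one]
  simp_rw [hexp]
  rw [integral_exp_mul_complex hc, norm_div]
  simp only [Complex.ofReal_one, mul_one, Complex.ofReal_zero, mul_zero, Complex.exp_zero]
  rw [Complex.norm_exp_I_mul_ofReal_sub_one, sinc_of_ne_zero (mul_ne_zero pi_ne_zero hu)]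
  simp only [norm_mul, Complex.norm_I, Complex.norm_real, norm_eq_abs, one_mul, abs_div,
    abs_mul, abs_two, abs_of_pos pi_pos]
  rw [show 2 * π * u / 2 = π * u by ring]
  field_simp

lemma two_div_pi_le_sinc {x : ℝ} (hx : 0 ≤ x) (hx' : x ≤ π / 2) : 2 / π ≤ sinc x := by
  rcases hx.eq_or_lt with rfl | hx
  · rw [sinc_zero, div_le_one pi_pos]
    linarith [pi_gt_three]
  rw [sinc_of_ne_zero hx.ne', le_div_iff₀ hx]
  exact mul_le_sin hx.le hx'

lemma div_sq_pi_le_sinc_sq {u : ℝ} (hu : |u| ≤ 1 / 2) : 4 / π ^ 2 ≤ sinc (π * u) ^ 2 := by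
  have heven : sinc (π * u) = sinc (π * |u|) := by
    rcases abs_choice u with h | h <;> simp [h]
  have hjordan : 2 / π ≤ sinc (π * |u|) :=
    two_div_pi_le_sinc (by positivity) (by nlinarith [pi_pos])
  rw [heven, show 4 / π ^ 2 = (2 / π) ^ 2 by ring]
  exact pow_le_pow_left₀ (by positivity) hjordan 2

lemma sinc_sq_le_one_div_sq {x : ℝ} (hx : x ≠ 0) : sinc x ^ 2 ≤ 1 / x ^ 2 := by
  rw [sinc_of_ne_zero hx, div_pow, div_le_div_iff_of_pos_right (by positivity)]
  exact sin_sq_le_one x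

lemma sinc_sq_sum_bounds_of_frame {lam : ℤ → ℝ} {A B : ℝ}
    (hframe : ∀ f : ℝ → ℂ, MemLp f 2 (volume.restrict (Icc (0 : ℝ) 1)) →
      A * ∫ x in Icc (0 : ℝ) 1, ‖f x‖ ^ 2 ≤
        (∑' k : ℤ,
          ‖∫ x in Icc (0 : ℝ) 1, f x * Complex.exp ((-2 * π * lam k * x : ℝ) * Complex.I)‖ ^ 2) ∧
      (∑' k : ℤ,
          ‖∫ x in Icc (0 : ℝ) 1, f x * Complex.exp ((-2 * π * lam k * x : ℝ) * Complex.I)‖ ^ 2) ≤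
        B * ∫ x in Icc (0 : ℝ) 1, ‖f x‖ ^ 2) (t : ℝ) :
    A ≤ ∑' k, sinc (π * (t - lam k)) ^ 2 ∧ ∑' k, sinc (π * (t - lam k)) ^ 2 ≤ B := by
  set e : ℝ → ℂ := fun x => Complex.exp ((2 * π * t * x : ℝ) * Complex.I)
  have he : MemLp e 2 (volume.restrict (Icc (0 : ℝ) 1)) :=
    MemLp.of_bound (by fun_prop) 1 (Eventually.of_forall fun x => by
      simp only [e, Complex.norm_exp_ofReal_mul_I, le_refl])
  have hnorm : ∫ x in Icc (0 : ℝ) 1, ‖e x‖ ^ 2 = 1 := by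
    simp only [e, Complex.norm_exp_ofReal_mul_I, one_pow]
    simp
  have hcoeff : ∀ k, ‖∫ x in Icc (0 : ℝ) 1,
      e x * Complex.exp ((-2 * π * lam k * x : ℝ) * Complex.I)‖ ^ 2 =
        sinc (π * (t - lam k)) ^ 2 := by
    intro k
    rw [← sq_abs (sinc _), ← norm_setIntegral_Icc_exp_eq_abs_sinc]
    congr 3
    ext x
    rw [← Complex.exp_add]
    push_cast
    ring_nf
  simpa only [hnorm, hcoeff, mul_one] using hframe e he

lemma sum_range_one_div_add_sq_le {c : ℝ} (hc : 1 ≤ c) (n : ℕ) :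
    ∑ i ∈ Finset.range n, 1 / (c + i) ^ 2 ≤ 2 / c := by
  have hterm : ∀ i : ℕ, 1 / (c + i) ^ 2 ≤ 2 / (c + i) - 2 / (c + (i + 1 : ℕ)) := by
    intro i
    have hi : (0 : ℝ) ≤ i := i.cast_nonneg
    push_cast
    rw [div_sub_div _ _ (by positivity) (by positivity), div_le_div_iff₀ (by positivity)
      (by positivity)]
    nlinarith
  calc ∑ i ∈ Finset.range n, 1 / (c + i) ^ 2
      ≤ ∑ i ∈ Finset.range n, (2 / (c + i) - 2 / (c + (i + 1 : ℕ))) :=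
        Finset.sum_le_sum fun i _ => hterm i
    _ = 2 / c - 2 / (c + n) := by
        rw [Finset.sum_range_sub' (fun i : ℕ => 2 / (c + i))]
        simp
    _ ≤ 2 / c := by
        have : 0 ≤ 2 / (c + n) := by positivity
        linarith

lemma summable_one_div_add_sq {c : ℝ} (hc : 1 ≤ c) : Summable fun i : ℕ => 1 / (c + i) ^ 2 :=
  summable_of_sum_range_le (fun _ => by positivity) (sum_range_one_div_add_sq_le hc)

lemma tsum_one_div_add_sq_le {c : ℝ} (hc : 1 ≤ c) : ∑' i : ℕ, 1 / (c + i) ^ 2 ≤ 2 / c :=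
  Real.tsum_le_of_sum_range_le (fun _ => by positivity) (sum_range_one_div_add_sq_le hc)

section Sampling

variable {lam : ℤ → ℝ}

lemma nat_le_sub_add_mul {M : ℕ} (hsep : ∀ j, 1 < lam (j + M) - lam j) (j : ℤ) (q : ℕ) :
    (q : ℝ) ≤ lam (j + M * q) - lam j := by
  induction q with
  | zero => simp
  | succ q ih =>
    have := hsep (j + M * q)
    push_cast
    rw [mul_add_one, ← add_assoc]
    linarith

lemma div_sub_one_lt_sub_add (hmono : Monotone lam) {M : ℕ} (hM : 0 < M)
    (hsep : ∀ j, 1 < lam (j + M) - lam j) (j : ℤ) (i : ℕ) :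
    (i : ℝ) / M - 1 < lam (j + i) - lam j := by
  have hq := nat_le_sub_add_mul hsep j (i / M)
  have hle : lam (j + M * (i / M : ℕ)) ≤ lam (j + i) := hmono (by
    have : M * (i / M) ≤ i := Nat.mul_div_le i M
    omega)
  have hlt : (i : ℝ) / M < (i / M : ℕ) + 1 := by
    rw [div_lt_iff₀ (by positivity), add_one_mul]
    exact_mod_cast Nat.lt_div_mul_add hM
  linarith

lemma sub_le_nat_mul_of_gap_le {c : ℝ} {N : ℤ} (hgap : ∀ k, N < k → lam k - lam (k - 1) ≤ c)
    (n : ℕ) : lam (N + n) - lam N ≤ n * c := by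
  induction n with
  | zero => simp
  | succ n ih =>
    have := hgap (N + n + 1) (by omega)
    rw [add_sub_cancel_right] at this
    push_cast
    rw [← add_assoc]
    linarith

lemma card_mul_le_of_sub_le_one {B : ℝ} (hmono : Monotone lam)
    (hsum : ∀ t, Summable fun k => sinc (π * (t - lam k)) ^ 2)
    (hB : ∀ t, ∑' k, sinc (π * (t - lam k)) ^ 2 ≤ B) {j : ℤ} {n : ℕ}
    (hspan : lam (j + n) - lam j ≤ 1) : (n + 1) * (4 / π ^ 2) ≤ B := by
  set t := (lam j + lam (j + n)) / 2 with ht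
  have hclose : ∀ k ∈ Finset.Icc j (j + n), 4 / π ^ 2 ≤ sinc (π * (t - lam k)) ^ 2 := by
    intro k hk
    rw [Finset.mem_Icc] at hk
    have := hmono hk.1
    have := hmono hk.2
    exact div_sq_pi_le_sinc_sq (abs_le.2 ⟨by linarith, by linarith⟩)
  calc ((n : ℝ) + 1) * (4 / π ^ 2) = ∑ k ∈ Finset.Icc j (j + n), 4 / π ^ 2 := by
        rw [Finset.sum_const, Int.card_Icc, nsmul_eq_mul]
        congr
        rw [show j + n + 1 - j = ((n + 1 : ℕ) : ℤ) by push_cast; ring, Int.toNat_natCast]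
        push_cast
        rfl
    _ ≤ ∑ k ∈ Finset.Icc j (j + n), sinc (π * (t - lam k)) ^ 2 := Finset.sum_le_sum hclose
    _ ≤ ∑' k, sinc (π * (t - lam k)) ^ 2 := (hsum t).sum_le_tsum _ fun k _ => sq_nonneg _
    _ ≤ B := hB t

lemma one_lt_sub_add_ceil {B : ℝ} (hmono : Monotone lam)
    (hsum : ∀ t, Summable fun k => sinc (π * (t - lam k)) ^ 2)
    (hB : ∀ t, ∑' k, sinc (π * (t - lam k)) ^ 2 ≤ B) (j : ℤ) :
    1 < lam (j + ⌈π ^ 2 * B / 4⌉₊) - lam j := by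
  by_contra! hspan
  have hcount := card_mul_le_of_sub_le_one hmono hsum hB hspan
  have hceil := Nat.le_ceil (π ^ 2 * B / 4)
  rw [mul_div_assoc', div_le_iff₀ (by positivity)] at hcount
  rw [div_le_iff₀ four_pos] at hceil
  linarith

lemma infinite_setOf_lt_gap {B : ℝ} (hmono : Monotone lam)
    (hsum : ∀ t, Summable fun k => sinc (π * (t - lam k)) ^ 2)
    (hB : ∀ t, ∑' k, sinc (π * (t - lam k)) ^ 2 ≤ B) {c : ℝ} (hc : 0 < c)
    (hcB : c < 4 / (π ^ 2 * B)) : {k | c < lam k - lam (k - 1)}.Infinite := by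
  intro hfin
  obtain ⟨N, hN⟩ := hfin.bddAbove
  have hsmall : ∀ k, N < k → lam k - lam (k - 1) ≤ c := fun k hk =>
    not_lt.1 fun h => (hN h).not_gt hk
  set n := ⌊1 / c⌋₊
  have hnc : n * c ≤ 1 := by
    rw [← le_div_iff₀ hc]
    exact Nat.floor_le (by positivity)
  have hcount := card_mul_le_of_sub_le_one hmono hsum hB
    ((sub_le_nat_mul_of_gap_le hsmall n).trans hnc)
  have hn : 1 < (n + 1) * c := by
    rw [← div_lt_iff₀ hc]
    exact Nat.lt_floor_add_one _
  have hB : 0 < B := lt_of_lt_of_le (by positivity) hcount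
  rw [lt_div_iff₀ (by positivity)] at hcB
  rw [mul_div_assoc', div_le_iff₀ (by positivity)] at hcount
  nlinarith [mul_le_mul_of_nonneg_left hcount hc.le]

lemma tsum_sinc_sq_le_of_gap (hmono : Monotone lam) {M : ℕ} (hM : 0 < M)
    (hsep : ∀ j, 1 < lam (j + M) - lam j) {k : ℤ} {t a : ℝ}
    (hright : lam k = t + a) (hleft : lam (k - 1) = t - a) (hc : 1 ≤ M * (a - 1)) :
    ∑' j, sinc (π * (t - lam j)) ^ 2 ≤ 4 * M / (π ^ 2 * (a - 1)) := by
  set h : ℕ → ℝ := fun i => (M / π) ^ 2 * (1 / (M * (a - 1) + i) ^ 2) with h_def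
  have hMpos : (0 : ℝ) < M := by exact_mod_cast hM
  have hfar : ∀ (i : ℕ) (u : ℝ), (a - 1) + i / M < |u| → sinc (π * u) ^ 2 ≤ h i := by
    intro i u hu
    have hw : (a - 1) + i / M = (M * (a - 1) + i) / M := by field_simp
    have hw0 : 0 < (M * (a - 1) + i) / M := by positivity
    rw [hw] at hu
    have hu0 : u ≠ 0 := abs_pos.1 (hw0.trans hu)
    calc sinc (π * u) ^ 2 ≤ 1 / (π * u) ^ 2 := sinc_sq_le_one_div_sq (by positivity)
      _ ≤ 1 / (π * ((M * (a - 1) + i) / M)) ^ 2 := by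
        rw [mul_pow, mul_pow, ← sq_abs u]
        gcongr
      _ = h i := by
        rw [h_def]
        field_simp
  have hR : ∀ i : ℕ, sinc (π * (t - lam (k + i))) ^ 2 ≤ h i := fun i => by
    have := div_sub_one_lt_sub_add hmono hM hsep k i
    exact hfar i _ (by rw [abs_sub_comm]; exact lt_abs.2 (Or.inl (by linarith)))
  have hL : ∀ i : ℕ, sinc (π * (t - lam (k + -(i + 1)))) ^ 2 ≤ h i := fun i => by
    have := div_sub_one_lt_sub_add hmono hM hsep (k + -(i + 1)) i
    rw [show k + -(i + 1) + i = k - 1 by ring] at this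
    exact hfar i _ (lt_abs.2 (Or.inl (by linarith)))
  have hh : Summable h := (summable_one_div_add_sq hc).mul_left _
  have hsumR := hh.of_nonneg_of_le (fun _ => sq_nonneg _) hR
  have hsumL := hh.of_nonneg_of_le (fun _ => sq_nonneg _) hL
  have htail : ∑' i, h i ≤ 2 * M / (π ^ 2 * (a - 1)) := by
    have ha : 0 < a - 1 := pos_of_mul_pos_right (one_pos.trans_le hc) hMpos.le
    calc ∑' i, h i ≤ (M / π) ^ 2 * (2 / (M * (a - 1))) := by
          rw [h_def, tsum_mul_left]
          gcongr
          exact tsum_one_div_add_sq_le hc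
      _ = 2 * M / (π ^ 2 * (a - 1)) := by
          field_simp
  calc ∑' j, sinc (π * (t - lam j)) ^ 2 = ∑' n : ℤ, sinc (π * (t - lam (k + n))) ^ 2 :=
        ((Equiv.addLeft k).tsum_eq fun j => sinc (π * (t - lam j)) ^ 2).symm
    _ = ∑' i : ℕ, sinc (π * (t - lam (k + i))) ^ 2 +
          ∑' i : ℕ, sinc (π * (t - lam (k + -(i + 1)))) ^ 2 :=
        tsum_of_nat_of_neg_add_one hsumR hsumL
    _ ≤ ∑' i, h i + ∑' i, h i :=
        add_le_add (hsumR.tsum_le_tsum hR hh) (hsumL.tsum_le_tsum hL hh)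
    _ ≤ 4 * M / (π ^ 2 * (a - 1)) := by
        rw [show 4 * (M : ℝ) / (π ^ 2 * (a - 1)) = 2 * M / (π ^ 2 * (a - 1)) +
          2 * M / (π ^ 2 * (a - 1)) by ring]
        exact add_le_add htail htail

lemma gap_le_of_sinc_sq_tsum_bounds {A B : ℝ} (hmono : Monotone lam) (hA : 0 < A)
    (hsum : ∀ t, Summable fun k => sinc (π * (t - lam k)) ^ 2)
    (hlower : ∀ t, A ≤ ∑' k, sinc (π * (t - lam k)) ^ 2)
    (hupper : ∀ t, ∑' k, sinc (π * (t - lam k)) ^ 2 ≤ B) (k : ℤ) :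
    lam k - lam (k - 1) ≤ π ^ 2 * B / A + 2 := by
  have hπ : 4 ≤ π ^ 2 := by nlinarith [pi_gt_three]
  have hB : 4 / π ^ 2 ≤ B := by
    simpa using card_mul_le_of_sub_le_one hmono hsum hupper (j := 0) (n := 0) (by simp)
  have hBpos : 0 < B := (by positivity : (0 : ℝ) < 4 / π ^ 2).trans_le hB
  have hBA : 1 ≤ B / A := (one_le_div hA).2 ((hlower 0).trans (hupper 0))
  rw [mul_div_assoc]
  obtain ⟨a, hgap⟩ : ∃ a, lam k - lam (k - 1) = 2 * a := ⟨_, (mul_div_cancel₀ _ two_ne_zero).symm⟩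
  by_cases hsmall : a ≤ 2
  · nlinarith
  set M := ⌈π ^ 2 * B / 4⌉₊
  have hM : 0 < M := Nat.ceil_pos.2 (by positivity)
  have hM1 : (1 : ℝ) ≤ M := by exact_mod_cast hM
  have hc : 1 ≤ M * (a - 1) := by nlinarith
  have hsum_le := (hlower _).trans (tsum_sinc_sq_le_of_gap hmono hM
    (one_lt_sub_add_ceil hmono hsum hupper) (k := k) (t := (lam k + lam (k - 1)) / 2) (a := a)
    (by linarith) (by linarith) hc)
  have hAa : A * (a - 1) ≤ 4 * M / π ^ 2 := by
    rw [le_div_iff₀ (by nlinarith)] at hsum_le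
    rw [le_div_iff₀ (by positivity)]
    linarith
  have hceil : 4 * (M : ℝ) / π ^ 2 ≤ B + 4 / π ^ 2 := by
    have := Nat.ceil_lt_add_one (show 0 ≤ π ^ 2 * B / 4 by positivity)
    rw [div_le_iff₀ (by positivity), add_mul, div_mul_cancel₀ _ (by positivity)]
    linarith
  have : 2 * (a - 1) ≤ B / A * π ^ 2 := by
    rw [div_mul_eq_mul_div, le_div_iff₀ hA]
    nlinarith
  linarith

end Sampling

theorem stmt5_general (lam : ℤ → ℝ) (hmono : StrictMono lam)
    (A B : ℝ) (hA : 0 < A)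
    (hframe : ∀ f : ℝ → ℂ, MemLp f 2 (volume.restrict (Icc (0 : ℝ) 1)) →
      A * ∫ x in Icc (0 : ℝ) 1, ‖f x‖ ^ 2 ≤
        (∑' k : ℤ,
          ‖∫ x in Icc (0 : ℝ) 1, f x * Complex.exp ((-2 * π * lam k * x : ℝ) * Complex.I)‖ ^ 2) ∧
      (∑' k : ℤ,
          ‖∫ x in Icc (0 : ℝ) 1, f x * Complex.exp ((-2 * π * lam k * x : ℝ) * Complex.I)‖ ^ 2) ≤
        B * ∫ x in Icc (0 : ℝ) 1, ‖f x‖ ^ 2) :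
    4 / (π ^ 2 * B) ≤ gmax lam ∧
      gmax lam ≤ (⨆ k : ℤ, (lam k - lam (k - 1))) ∧
      ∀ k : ℤ, lam k - lam (k - 1) ≤ π ^ 2 * B / A + 2 := by
  have hbounds := sinc_sq_sum_bounds_of_frame hframe
  have hsum : ∀ t, Summable fun k => sinc (π * (t - lam k)) ^ 2 := fun t =>
    by_contra fun h => (hA.trans_le (hbounds t).1).ne' (tsum_eq_zero_of_not_summable h)
  have hupper := fun t => (hbounds t).2
  have hB : 0 < B := hA.trans_le ((hbounds 0).1.trans (hbounds 0).2)
  have hgap :=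
    gap_le_of_sinc_sq_tsum_bounds hmono.monotone hA hsum (fun t => (hbounds t).1) hupper
  have hIoo : Ioo 0 (4 / (π ^ 2 * B)) ⊆ {c | 0 ≤ c ∧ {k | c < lam k - lam (k - 1)}.Infinite} :=
    fun c hc => ⟨hc.1.le, infinite_setOf_lt_gap hmono.monotone hsum hupper hc.1 hc.2⟩
  have hne : (Ioo 0 (4 / (π ^ 2 * B))).Nonempty := nonempty_Ioo.2 (by positivity)
  have hbdd : BddAbove {c | 0 ≤ c ∧ {k | c < lam k - lam (k - 1)}.Infinite} :=
    ⟨_, fun c ⟨_, hc⟩ => hc.nonempty.elim fun k hk => hk.le.trans (hgap k)⟩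
  refine ⟨?_, ?_, hgap⟩
  · calc 4 / (π ^ 2 * B) = sSup (Ioo 0 (4 / (π ^ 2 * B))) := (csSup_Ioo (by positivity)).symm
      _ ≤ gmax lam := csSup_le_csSup hbdd hne hIoo
  · exact csSup_le (hne.mono hIoo) fun c ⟨_, hc⟩ => hc.nonempty.elim fun k hk =>
      hk.le.trans (le_ciSup ⟨_, forall_mem_range.2 hgap⟩ k)

theorem stmt5 (lam : ℤ → ℝ) (hmono : StrictMono lam)
    (A B : ℝ) (hA : 0 < A) (hAB : A ≤ B)
    (hframe : ∀ f : ℝ → ℂ, MemLp f 2 (volume.restrict (Icc (0 : ℝ) 1)) →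
      A * ∫ x in Icc (0 : ℝ) 1, ‖f x‖ ^ 2 ≤
        (∑' k : ℤ,
          ‖∫ x in Icc (0 : ℝ) 1, f x * Complex.exp ((-2 * π * lam k * x : ℝ) * Complex.I)‖ ^ 2) ∧
      (∑' k : ℤ,
          ‖∫ x in Icc (0 : ℝ) 1, f x * Complex.exp ((-2 * π * lam k * x : ℝ) * Complex.I)‖ ^ 2) ≤
        B * ∫ x in Icc (0 : ℝ) 1, ‖f x‖ ^ 2) :
    4 / (π ^ 2 * B) ≤ gmax lam ∧
      gmax lam ≤ (⨆ k : ℤ, (lam k - lam (k - 1))) ∧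
      ∀ k : ℤ, lam k - lam (k - 1) ≤ π ^ 2 * B / A + 2 :=
  stmt5_general lam hmono A B hA hframe
end
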